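/- Legendre's relation: For 0 < r < 1, E(r)K'(r) + E'(r)K(r) - K(r)K'(r) = π/2, where K(r) = ∫₀^{π/2} (1 - r² sin²t)^{-1/2} dt, E(r) = ∫₀^{π/2} (1 - r² sin²t)^{1/2} dt, K'(r) = K(√(1-r²)), E'(r) = E(√(1-r²)). -/

import Mathlib

open Real intervalIntegral

/-- Complete elliptic integral of the first kind. -/
noncomputable def ellK (r : ℝ) : ℝ :=
  ∫ t in (0 : ℝ)..(π / 2), (1 - r ^ 2 * Real.sin t ^ 2) ^ (-(1 / 2) : ℝ)

/-- Complete elliptic integral of the second kind. -/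
noncomputable def ellE (r : ℝ) : ℝ :=
  ∫ t in (0 : ℝ)..(π / 2), (1 - r ^ 2 * Real.sin t ^ 2) ^ ((1 / 2) : ℝ)

/-!
Legendre's form `L(r) = E K' + E' K - K K'` has zero derivative on `(0, 1)`. Differentiating
under the integral sign gives `dE/dr = (E - K) / r` and `dK/dr = (E / r'^2 - K) / r`, the latter
through the integration by parts identity `r'^2 ∫₀^{π/2} (1 - r² sin² t)^{-3/2} dt = E`; with
`dr'/dr = -r / r'` the four terms cancel. So `L` is constant, and its value is its limit as
`r → 0⁺`: there `K → π/2` and `E' → E(1) = 1`, while `K' (E - K) = O(r)` because `r K' ≤ π/2`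
and `0 ≤ K - E ≤ r² K`.
-/

open Filter Topology Set

noncomputable def ellIntegral (c r : ℝ) : ℝ :=
  ∫ t in (0 : ℝ)..(π / 2), (1 - r ^ 2 * sin t ^ 2) ^ c

theorem ellK_eq_ellIntegral : ellK = ellIntegral (-(1 / 2)) := rfl

theorem ellE_eq_ellIntegral : ellE = ellIntegral (1 / 2) := rfl

theorem one_sub_sq_le_one_sub_sq_mul_sin_sq (m t : ℝ) : 1 - m ^ 2 ≤ 1 - m ^ 2 * sin t ^ 2 := by
  nlinarith [sin_sq_le_one t, sq_nonneg m]

theorem one_sub_sq_mul_sin_sq_le_one (m t : ℝ) : 1 - m ^ 2 * sin t ^ 2 ≤ 1 := by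
  nlinarith [sq_nonneg (m * sin t)]

section Integrand

variable {m : ℝ}

theorem one_sub_sq_mul_sin_sq_pos (hm : m ^ 2 < 1) (t : ℝ) : 0 < 1 - m ^ 2 * sin t ^ 2 := by
  linarith [one_sub_sq_le_one_sub_sq_mul_sin_sq m t]

theorem continuous_one_sub_sq_mul_sin_sq_rpow (hm : m ^ 2 < 1) (c : ℝ) :
    Continuous fun t ↦ (1 - m ^ 2 * sin t ^ 2) ^ c :=
  (by fun_prop : Continuous fun t ↦ 1 - m ^ 2 * sin t ^ 2).rpow_const
    fun t ↦ .inl (one_sub_sq_mul_sin_sq_pos hm t).ne'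

theorem intervalIntegrable_one_sub_sq_mul_sin_sq_rpow (hm : m ^ 2 < 1) (c : ℝ) (a b : ℝ) :
    IntervalIntegrable (fun t ↦ (1 - m ^ 2 * sin t ^ 2) ^ c) MeasureTheory.volume a b :=
  (continuous_one_sub_sq_mul_sin_sq_rpow hm c).intervalIntegrable a b

end Integrand

theorem norm_mul_one_sub_sq_mul_sin_sq_rpow_sub_one_le (c : ℝ) {y δ : ℝ} (hδ : 0 < δ)
    (hy : y ^ 2 ≤ 1 - δ) (t : ℝ) :
    ‖-2 * c * y * sin t ^ 2 * (1 - y ^ 2 * sin t ^ 2) ^ (c - 1)‖ ≤ 2 * |c| * (δ ^ (c - 1) + 1) := by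
  have hXδ : δ ≤ 1 - y ^ 2 * sin t ^ 2 := by linarith [one_sub_sq_le_one_sub_sq_mul_sin_sq y t]
  have hX : 0 < 1 - y ^ 2 * sin t ^ 2 := hδ.trans_le hXδ
  have hpow : (1 - y ^ 2 * sin t ^ 2) ^ (c - 1) ≤ δ ^ (c - 1) + 1 := by
    rcases le_total (c - 1) 0 with hc | hc
    · linarith [rpow_le_rpow_of_nonpos hδ hXδ hc]
    · linarith [rpow_le_one hX.le (one_sub_sq_mul_sin_sq_le_one y t) hc, rpow_nonneg hδ.le (c - 1)]
  have hy1 : |y| * sin t ^ 2 ≤ 1 := by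
    have : |y| ≤ 1 := by rw [← abs_one, ← sq_le_sq]; simp only [one_pow]; linarith
    nlinarith [sin_sq_le_one t, abs_nonneg y, sq_nonneg (sin t)]
  rw [norm_mul, norm_mul, norm_mul, norm_mul, norm_neg, Real.norm_of_nonneg (sq_nonneg _),
    Real.norm_of_nonneg (rpow_nonneg hX.le _)]
  simp only [Real.norm_eq_abs, abs_two]
  have := mul_le_mul hy1 hpow (rpow_nonneg hX.le _) zero_le_one
  nlinarith [abs_nonneg c]

theorem hasDerivAt_ellIntegral (c : ℝ) {x : ℝ} (hx : x ^ 2 < 1) :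
    HasDerivAt (ellIntegral c)
      (∫ t in (0 : ℝ)..(π / 2), -2 * c * x * sin t ^ 2 * (1 - x ^ 2 * sin t ^ 2) ^ (c - 1)) x := by
  set ρ := (1 + x ^ 2) / 2
  have hδ : 0 < 1 - ρ := by simp only [ρ]; linarith
  have hs : {y : ℝ | y ^ 2 < ρ} ∈ 𝓝 x :=
    (isOpen_lt (by fun_prop) continuous_const).mem_nhds (by simp only [mem_ofPred_eq, ρ]; linarith)
  have hsq : ∀ y ∈ {y : ℝ | y ^ 2 < ρ}, y ^ 2 < 1 := fun y hy ↦ by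
    simp only [mem_ofPred_eq, ρ] at hy; linarith
  refine (intervalIntegral.hasDerivAt_integral_of_dominated_loc_of_deriv_le
    (F' := fun y t ↦ -2 * c * y * sin t ^ 2 * (1 - y ^ 2 * sin t ^ 2) ^ (c - 1))
    (bound := fun _ ↦ 2 * |c| * ((1 - ρ) ^ (c - 1) + 1)) hs ?_
    (intervalIntegrable_one_sub_sq_mul_sin_sq_rpow hx c _ _) ?_ ?_ intervalIntegrable_const ?_).2
  · filter_upwards [hs] with y hy
    exact (continuous_one_sub_sq_mul_sin_sq_rpow (hsq y hy) c).aestronglyMeasurable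
  · exact ((by fun_prop : Continuous fun t ↦ -2 * c * x * sin t ^ 2).mul
      (continuous_one_sub_sq_mul_sin_sq_rpow hx (c - 1))).aestronglyMeasurable
  · exact .of_forall fun t _ y hy ↦
      norm_mul_one_sub_sq_mul_sin_sq_rpow_sub_one_le c hδ (by rw [sub_sub_cancel]; exact hy.le) t
  · refine .of_forall fun t _ y hy ↦ ?_
    refine ((((hasDerivAt_pow 2 y).mul_const (sin t ^ 2)).const_sub 1).rpow_const
      (.inl (one_sub_sq_mul_sin_sq_pos (hsq y hy) t).ne')).congr_deriv ?_
    simp only [Nat.cast_ofNat, Nat.add_one_sub_one, pow_one]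
    ring

theorem hasDerivAt_ellIntegral_of_ne_zero (c : ℝ) {x : ℝ} (hx0 : x ≠ 0) (hx : x ^ 2 < 1) :
    HasDerivAt (ellIntegral c) (2 * c / x * (ellIntegral c x - ellIntegral (c - 1) x)) x := by
  refine (hasDerivAt_ellIntegral c hx).congr_deriv ?_
  have hpt : ∀ t, -2 * c * x * sin t ^ 2 * (1 - x ^ 2 * sin t ^ 2) ^ (c - 1) =
      2 * c / x * ((1 - x ^ 2 * sin t ^ 2) ^ c - (1 - x ^ 2 * sin t ^ 2) ^ (c - 1)) := by
    intro t
    have hX := (one_sub_sq_mul_sin_sq_pos hx t).ne'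
    rw [rpow_sub_one hX]
    field_simp
    ring
  simp_rw [hpt]
  rw [intervalIntegral.integral_const_mul, intervalIntegral.integral_sub
    (intervalIntegrable_one_sub_sq_mul_sin_sq_rpow hx _ _ _)
    (intervalIntegrable_one_sub_sq_mul_sin_sq_rpow hx _ _ _)]
  rfl

theorem one_sub_sq_mul_ellIntegral_neg_three_halves {m : ℝ} (hm : m ^ 2 < 1) :
    (1 - m ^ 2) * ellIntegral (-(3 / 2)) m = ellE m := by
  have hderiv : ∀ t, HasDerivAt
      (fun u ↦ m ^ 2 * sin u * cos u * (1 - m ^ 2 * sin u ^ 2) ^ (-(1 / 2) : ℝ))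
      ((1 - m ^ 2 * sin t ^ 2) ^ (1 / 2 : ℝ) -
        (1 - m ^ 2) * (1 - m ^ 2 * sin t ^ 2) ^ (-(3 / 2) : ℝ)) t := by
    intro t
    have hX := one_sub_sq_mul_sin_sq_pos hm t
    have h := ((((hasDerivAt_sin t).const_mul (m ^ 2)).mul (hasDerivAt_cos t)).mul
      ((((hasDerivAt_sin t).pow 2).const_mul (m ^ 2)).const_sub 1 |>.rpow_const
        (p := -(1 / 2)) (.inl hX.ne')))
    refine h.congr_deriv ?_
    have h12 : (1 - m ^ 2 * sin t ^ 2) ^ (1 / 2 : ℝ) =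
        (1 - m ^ 2 * sin t ^ 2) ^ (-(3 / 2) : ℝ) * (1 - m ^ 2 * sin t ^ 2) ^ 2 := by
      rw [← rpow_add_natCast hX.ne']; norm_num
    have h32 : (1 - m ^ 2 * sin t ^ 2) ^ (-(1 / 2) : ℝ) =
        (1 - m ^ 2 * sin t ^ 2) ^ (-(3 / 2) : ℝ) * (1 - m ^ 2 * sin t ^ 2) := by
      rw [← rpow_add_one hX.ne']; norm_num
    simp only [Pi.mul_apply, Pi.pow_apply, Nat.cast_ofNat, Nat.add_one_sub_one, pow_one]
    rw [show (-(1 / 2) - 1 : ℝ) = -(3 / 2) by norm_num, h12, h32]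
    linear_combination m ^ 2 * (1 - m ^ 2 * sin t ^ 2) ^ (-(3 / 2) : ℝ) * sin_sq_add_cos_sq t
  have hint := intervalIntegral.integral_eq_sub_of_hasDerivAt (a := 0) (b := π / 2)
    (fun t _ ↦ hderiv t) ((intervalIntegrable_one_sub_sq_mul_sin_sq_rpow hm _ _ _).sub
      ((intervalIntegrable_one_sub_sq_mul_sin_sq_rpow hm _ _ _).const_mul _))
  rw [intervalIntegral.integral_sub (intervalIntegrable_one_sub_sq_mul_sin_sq_rpow hm _ _ _)
    ((intervalIntegrable_one_sub_sq_mul_sin_sq_rpow hm _ _ _).const_mul _),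
    intervalIntegral.integral_const_mul] at hint
  simp only [cos_pi_div_two, sin_zero] at hint
  unfold ellIntegral ellE
  linarith

theorem hasDerivAt_ellE {r : ℝ} (hr0 : r ≠ 0) (hr : r ^ 2 < 1) :
    HasDerivAt ellE ((ellE r - ellK r) / r) r := by
  have h := hasDerivAt_ellIntegral_of_ne_zero (1 / 2) hr0 hr
  rw [show (1 / 2 - 1 : ℝ) = -(1 / 2) by norm_num, ← ellE_eq_ellIntegral,
    ← ellK_eq_ellIntegral] at h
  exact h.congr_deriv (by ring)

theorem hasDerivAt_ellK {r : ℝ} (hr0 : r ≠ 0) (hr : r ^ 2 < 1) :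
    HasDerivAt ellK ((ellE r / (1 - r ^ 2) - ellK r) / r) r := by
  have h := hasDerivAt_ellIntegral_of_ne_zero (-(1 / 2)) hr0 hr
  have h32 : ellIntegral (-(3 / 2)) r = ellE r / (1 - r ^ 2) := by
    rw [← one_sub_sq_mul_ellIntegral_neg_three_halves hr]
    field_simp [(sub_pos.2 hr).ne']
  rw [show (-(1 / 2) - 1 : ℝ) = -(3 / 2) by norm_num, h32, ← ellK_eq_ellIntegral] at h
  exact h.congr_deriv (by ring)

theorem continuous_ellE : Continuous ellE :=
  intervalIntegral.continuous_parametric_intervalIntegral_of_continuous'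
    (by fun_prop (disch := norm_num)) _ _

theorem ellE_one : ellE 1 = 1 := by
  have hcos : ∀ t ∈ uIcc 0 (π / 2), (1 - 1 ^ 2 * sin t ^ 2) ^ (1 / 2 : ℝ) = cos t := by
    intro t ht
    rw [uIcc_of_le (by positivity)] at ht
    rw [one_pow, one_mul, ← cos_sq', ← sqrt_eq_rpow,
      sqrt_sq (cos_nonneg_of_mem_Icc ⟨by linarith [ht.1, pi_pos], ht.2⟩)]
  rw [ellE, intervalIntegral.integral_congr hcos, integral_cos]
  simp

theorem continuousAt_ellK_zero : ContinuousAt ellK 0 :=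
  (hasDerivAt_ellIntegral _ (by norm_num)).continuousAt

theorem ellK_zero : ellK 0 = π / 2 := by
  simp [ellK]

section Bounds

variable {m : ℝ}

theorem ellK_nonneg (hm : m ^ 2 < 1) : 0 ≤ ellK m :=
  intervalIntegral.integral_nonneg (by positivity) fun t _ ↦ rpow_nonneg
    (one_sub_sq_mul_sin_sq_pos hm t).le _

theorem sqrt_one_sub_sq_mul_ellK_le (hm : m ^ 2 < 1) : √(1 - m ^ 2) * ellK m ≤ π / 2 := by
  have hpt : ∀ t ∈ Icc 0 (π / 2), √(1 - m ^ 2) * (1 - m ^ 2 * sin t ^ 2) ^ (-(1 / 2) : ℝ) ≤ 1 := by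
    intro t _
    have hX := one_sub_sq_mul_sin_sq_pos hm t
    rw [rpow_neg hX.le, ← sqrt_eq_rpow, ← div_eq_mul_inv, div_le_one (sqrt_pos.2 hX)]
    exact sqrt_le_sqrt (one_sub_sq_le_one_sub_sq_mul_sin_sq m t)
  rw [ellK, ← intervalIntegral.integral_const_mul]
  calc _ ≤ ∫ _ in (0 : ℝ)..(π / 2), (1 : ℝ) :=
        intervalIntegral.integral_mono_on (by positivity)
          ((intervalIntegrable_one_sub_sq_mul_sin_sq_rpow hm _ _ _).const_mul _)
          intervalIntegrable_const hpt
    _ = π / 2 := by simp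

theorem ellK_sub_ellE_eq (hm : m ^ 2 < 1) :
    ellK m - ellE m =
      ∫ t in (0 : ℝ)..(π / 2), m ^ 2 * sin t ^ 2 * (1 - m ^ 2 * sin t ^ 2) ^ (-(1 / 2) : ℝ) := by
  rw [ellK, ellE, ← intervalIntegral.integral_sub
    (intervalIntegrable_one_sub_sq_mul_sin_sq_rpow hm _ _ _)
    (intervalIntegrable_one_sub_sq_mul_sin_sq_rpow hm _ _ _)]
  refine intervalIntegral.integral_congr fun t _ ↦ ?_
  have hX := one_sub_sq_mul_sin_sq_pos hm t
  have h : (1 - m ^ 2 * sin t ^ 2) ^ (1 / 2 : ℝ) =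
      (1 - m ^ 2 * sin t ^ 2) ^ (-(1 / 2) : ℝ) * (1 - m ^ 2 * sin t ^ 2) := by
    rw [← rpow_add_one hX.ne']; norm_num
  rw [h]
  ring

theorem ellE_le_ellK (hm : m ^ 2 < 1) : ellE m ≤ ellK m := by
  rw [← sub_nonneg, ellK_sub_ellE_eq hm]
  exact intervalIntegral.integral_nonneg (by positivity) fun t _ ↦ by
    have := (one_sub_sq_mul_sin_sq_pos hm t).le
    positivity

theorem ellK_sub_ellE_le (hm : m ^ 2 < 1) : ellK m - ellE m ≤ m ^ 2 * ellK m := by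
  rw [ellK_sub_ellE_eq hm, ellK, ← intervalIntegral.integral_const_mul]
  refine intervalIntegral.integral_mono_on (by positivity)
    (((by fun_prop : Continuous fun t ↦ m ^ 2 * sin t ^ 2).mul
      (continuous_one_sub_sq_mul_sin_sq_rpow hm _)).intervalIntegrable _ _)
    ((intervalIntegrable_one_sub_sq_mul_sin_sq_rpow hm _ _ _).const_mul _) fun t _ ↦ ?_
  have hX := rpow_nonneg (one_sub_sq_mul_sin_sq_pos hm t).le (-(1 / 2) : ℝ)
  gcongr
  nlinarith [sin_sq_le_one t, sq_nonneg m]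

end Bounds

theorem HasDerivAt.comp_sqrt_one_sub_sq {f : ℝ → ℝ} {f' r : ℝ} (hr : r ^ 2 < 1)
    (hf : HasDerivAt f f' √(1 - r ^ 2)) :
    HasDerivAt (fun x ↦ f √(1 - x ^ 2)) (-r / √(1 - r ^ 2) * f') r := by
  have h1 : 1 - r ^ 2 ≠ 0 := by linarith
  refine (hf.comp r (((hasDerivAt_pow 2 r).const_sub 1).sqrt h1)).congr_deriv ?_
  field_simp
  ring

theorem sqrt_one_sub_sq_mem_Ioo {r : ℝ} (hr : r ∈ Ioo 0 1) : √(1 - r ^ 2) ∈ Ioo 0 1 := by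
  have : r ^ 2 < 1 := by nlinarith [hr.1, hr.2]
  refine ⟨sqrt_pos.2 (by linarith), (sqrt_lt' one_pos).2 ?_⟩
  nlinarith [hr.1]

noncomputable def legendreForm (r : ℝ) : ℝ :=
  ellE r * ellK √(1 - r ^ 2) + ellE √(1 - r ^ 2) * ellK r - ellK r * ellK √(1 - r ^ 2)

theorem hasDerivAt_legendreForm {r : ℝ} (hr : r ∈ Ioo 0 1) : HasDerivAt legendreForm 0 r := by
  have hr2 : r ^ 2 < 1 := by nlinarith [hr.1, hr.2]
  have hs := sqrt_one_sub_sq_mem_Ioo hr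
  have hs2 : √(1 - r ^ 2) ^ 2 = 1 - r ^ 2 := sq_sqrt (by linarith)
  have hs2' : √(1 - r ^ 2) ^ 2 < 1 := by nlinarith [hs.1, hs.2]
  have hE := hasDerivAt_ellE hr.1.ne' hr2
  have hK := hasDerivAt_ellK hr.1.ne' hr2
  have hEs := (hasDerivAt_ellE hs.1.ne' hs2').comp_sqrt_one_sub_sq hr2
  have hKs := (hasDerivAt_ellK hs.1.ne' hs2').comp_sqrt_one_sub_sq hr2
  refine (((hE.mul hKs).add (hEs.mul hK)).sub (hK.mul hKs)).congr_deriv ?_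
  set s := √(1 - r ^ 2)
  rw [show 1 - s ^ 2 = r ^ 2 by linarith, ← hs2]
  have hr0 := hr.1.ne'
  have hs0 := hs.1.ne'
  field_simp
  linear_combination (ellE r * ellK s - ellK r * ellE s) * hs2

theorem norm_ellK_sqrt_one_sub_sq_mul_sub_le {x : ℝ} (hx : x ∈ Ioo 0 1) :
    ‖ellK √(1 - x ^ 2) * (ellE x - ellK x)‖ ≤ π / 2 * (x * ellK x) := by
  have hx2 : x ^ 2 < 1 := by nlinarith [hx.1, hx.2]
  have hs := sqrt_one_sub_sq_mem_Ioo hx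
  have hs2 : √(1 - x ^ 2) ^ 2 < 1 := by nlinarith [hs.1, hs.2]
  have hK's : x * ellK √(1 - x ^ 2) ≤ π / 2 := by
    have h := sqrt_one_sub_sq_mul_ellK_le hs2
    rwa [sq_sqrt (by linarith), sub_sub_cancel, sqrt_sq hx.1.le] at h
  have hK' := ellK_nonneg hs2
  rw [norm_mul, Real.norm_of_nonneg hK', Real.norm_of_nonpos (sub_nonpos.2 (ellE_le_ellK hx2)),
    neg_sub]
  calc ellK √(1 - x ^ 2) * (ellK x - ellE x) ≤ ellK √(1 - x ^ 2) * (x ^ 2 * ellK x) :=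
        mul_le_mul_of_nonneg_left (ellK_sub_ellE_le hx2) hK'
    _ = x * ellK √(1 - x ^ 2) * (x * ellK x) := by ring
    _ ≤ π / 2 * (x * ellK x) :=
        mul_le_mul_of_nonneg_right hK's (mul_nonneg hx.1.le (ellK_nonneg hx2))

theorem tendsto_legendreForm_nhdsGT_zero : Tendsto legendreForm (𝓝[>] 0) (𝓝 (π / 2)) := by
  have hE' : Tendsto (fun x ↦ ellE √(1 - x ^ 2)) (𝓝[>] 0) (𝓝 1) := by
    have := (continuous_ellE.comp' (by fun_prop : Continuous fun x : ℝ ↦ √(1 - x ^ 2))).tendsto 0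
    simpa [ellE_one] using this.mono_left nhdsWithin_le_nhds
  have hK : Tendsto ellK (𝓝[>] 0) (𝓝 (π / 2)) :=
    ellK_zero ▸ continuousAt_ellK_zero.tendsto.mono_left nhdsWithin_le_nhds
  have hbound : Tendsto (fun x ↦ π / 2 * (x * ellK x)) (𝓝[>] 0) (𝓝 0) := by
    simpa using ((continuousAt_id.mul continuousAt_ellK_zero).tendsto.const_mul (π / 2)).mono_left
      nhdsWithin_le_nhds
  have hsmall : Tendsto (fun x ↦ ellK √(1 - x ^ 2) * (ellE x - ellK x)) (𝓝[>] 0) (𝓝 0) :=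
    squeeze_zero_norm' (eventually_of_mem (Ioo_mem_nhdsGT one_pos)
      fun x hx ↦ norm_ellK_sqrt_one_sub_sq_mul_sub_le hx) hbound
  have h := hsmall.add (hE'.mul hK)
  rw [zero_add, one_mul] at h
  exact h.congr fun x ↦ by unfold legendreForm; ring

theorem legendre_relation (r : ℝ) (hr : r ∈ Set.Ioo (0 : ℝ) 1) :
    ellE r * ellK (Real.sqrt (1 - r ^ 2)) + ellE (Real.sqrt (1 - r ^ 2)) * ellK r -
      ellK r * ellK (Real.sqrt (1 - r ^ 2)) = π / 2 := by
  have hconst : ∀ x ∈ Ioo (0 : ℝ) 1, legendreForm x = legendreForm r := fun x hx ↦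
    isOpen_Ioo.is_const_of_deriv_eq_zero isPreconnected_Ioo
      (fun y hy ↦ (hasDerivAt_legendreForm hy).differentiableAt.differentiableWithinAt)
      (fun y hy ↦ (hasDerivAt_legendreForm hy).deriv) hx hr
  have hlim : Tendsto legendreForm (𝓝[>] 0) (𝓝 (legendreForm r)) :=
    tendsto_const_nhds.congr' (eventually_of_mem (Ioo_mem_nhdsGT one_pos)
      fun x hx ↦ (hconst x hx).symm)
  exact tendsto_nhds_unique hlim tendsto_legendreForm_nhdsGT_zero
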